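/- arXiv:2406.07825 — 3 statements merged into one kernel-verified Lean document; each statement's English description precedes it below -/
import Mathlib

section
/- Strong duality for the shape-constrained distributional optimization problem: under Assumptions 1, 2 and 3, val(P) = val(D). -/
/-!
Weak duality is immediate. For the converse only the moments `(E_g[φ₀ L], E_g[φ_j L])` of `L`
matter, and by Assumptions 1 and 2 they range over a convex set `S ⊆ ℝ × ℝ^l`. If `p` is the
(finite) primal value, the vectors dominating `(p - a, b - μ)` for some `(a, b) ∈ S`, strictly in
the objective coordinate and weakly in the inequality coordinates, form a convex set missing the
origin, so a nonzero functional `(a, β)` is nonpositive on it. Slater's condition rules out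
`a = 0`: it forces `β_j = 0` on the inequality constraints, and the interior point condition then
forces `β_j = 0` on the equality constraints. Hence `λ = β / a` is a dual point of value at most
`p`.
-/

open MeasureTheory Filter Set

noncomputable section

namespace ShapeDRO

variable {N : ℕ}

/-- Expectation under the sampling density `g` over the domain `𝒳`:
`E_g[h] = ∫_𝒳 h(x) g(x) dx`. -/
def Eg (𝒳 : Set (Fin N → ℝ)) (g h : (Fin N → ℝ) → ℝ) : ℝ :=
  ∫ x in 𝒳, h x * g x

/-- The feasible set of the primal problem (P): `L ∈ 𝓛` satisfying the
inequality moment constraints (indices `j < m`) and the equality moment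
constraints (indices `m ≤ j`). -/
def feasible (𝒳 : Set (Fin N → ℝ)) (g : (Fin N → ℝ) → ℝ) {l : ℕ} (m : ℕ)
    (φ : Fin l → (Fin N → ℝ) → ℝ) (μc : Fin l → ℝ)
    (𝓛 : Set ((Fin N → ℝ) → ℝ)) : Set ((Fin N → ℝ) → ℝ) :=
  {L ∈ 𝓛 | ∀ j : Fin l,
    ((j : ℕ) < m → Eg 𝒳 g (fun x => φ j x * L x) ≤ μc j) ∧
    (m ≤ (j : ℕ) → Eg 𝒳 g (fun x => φ j x * L x) = μc j)}

/-- The optimal value of the primal problem (P), as an extended real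
(`⊥ = -∞` if there is no feasible solution). -/
def valP (𝒳 : Set (Fin N → ℝ)) (g : (Fin N → ℝ) → ℝ) {l : ℕ} (m : ℕ)
    (φ0 : (Fin N → ℝ) → ℝ) (φ : Fin l → (Fin N → ℝ) → ℝ) (μc : Fin l → ℝ)
    (𝓛 : Set ((Fin N → ℝ) → ℝ)) : EReal :=
  sSup ((fun L => ((Eg 𝒳 g (fun x => φ0 x * L x) : ℝ) : EReal)) ''
    feasible 𝒳 g m φ μc 𝓛)

/-- The set of admissible Lagrange multipliers `Λ = ℝ₊^m × ℝ^{l-m}`. -/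
def multipliers (l m : ℕ) : Set (Fin l → ℝ) :=
  {lam | ∀ j : Fin l, (j : ℕ) < m → 0 ≤ lam j}

/-- The optimal value of the Lagrangian dual problem (D). -/
def valD (𝒳 : Set (Fin N → ℝ)) (g : (Fin N → ℝ) → ℝ) {l : ℕ} (m : ℕ)
    (φ0 : (Fin N → ℝ) → ℝ) (φ : Fin l → (Fin N → ℝ) → ℝ) (μc : Fin l → ℝ)
    (𝓛 : Set ((Fin N → ℝ) → ℝ)) : EReal :=
  ⨅ lam ∈ multipliers l m,
    sSup ((fun L => ((Eg 𝒳 g (fun x => φ0 x * L x)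
      - ∑ j : Fin l, lam j * (Eg 𝒳 g (fun x => φ j x * L x) - μc j) : ℝ) : EReal)) '' 𝓛)

open Topology

theorem nonpos_and_nonpos_of_forall_add_mul_nonpos {a b : ℝ}
    (h : ∀ t : ℝ, 0 < t → a + t * b ≤ 0) : a ≤ 0 ∧ b ≤ 0 := by
  constructor
  · have hlim : Tendsto (fun t : ℝ => a + t * b) (𝓝[>] 0) (𝓝 a) :=
      tendsto_nhdsWithin_of_tendsto_nhds
        ((by fun_prop : Continuous fun t : ℝ => a + t * b).tendsto' 0 a (by simp))
    exact le_of_tendsto hlim (eventually_nhdsWithin_of_forall h)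
  · by_contra! hb
    have := h ((|a| + 1) / b) (by positivity)
    rw [div_mul_cancel₀ _ hb.ne'] at this
    linarith [neg_abs_le a]

theorem dual_prod_pi_apply {ι : Type*} [Fintype ι] [DecidableEq ι]
    (f : StrongDual ℝ (ℝ × (ι → ℝ))) (z : ℝ × (ι → ℝ)) :
    f z = z.1 * f (1, 0) + ∑ i, z.2 i * f (0, Pi.single i 1) := by
  have hz : z = z.1 • ((1 : ℝ), (0 : ι → ℝ)) + ∑ i, z.2 i • ((0 : ℝ), (Pi.single i 1 : ι → ℝ)) := by
    ext j <;> simp [Prod.fst_sum, Prod.snd_sum, Finset.sum_apply, Pi.single_apply]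
  conv_lhs => rw [hz]
  simp only [map_add, map_sum, map_smul, smul_eq_mul]

theorem exists_dual_ne_zero_le_of_notMem {E : Type*} [NormedAddCommGroup E] [NormedSpace ℝ E]
    [FiniteDimensional ℝ E] {s : Set E} {x : E} (hs : Convex ℝ s) (hne : s.Nonempty)
    (hx : x ∉ s) : ∃ f : StrongDual ℝ E, f ≠ 0 ∧ ∀ a ∈ s, f a ≤ f x := by
  by_cases hint : (interior s).Nonempty
  · exact geometric_hahn_banach_of_nonempty_interior_point hs (fun h => hx (interior_subset h)) hint
  -- Otherwise `s` lies in a proper affine subspace, on which some nonzero functional is constant.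
  obtain ⟨a₀, ha₀⟩ := hne
  have hspan : vectorSpan ℝ s < ⊤ := by
    rwa [lt_top_iff_ne_top, ne_eq,
      ← AffineSubspace.affineSpan_eq_top_iff_vectorSpan_eq_top_of_nonempty ℝ E E ⟨a₀, ha₀⟩,
      ← hs.interior_nonempty_iff_affineSpan_eq_top]
  obtain ⟨f, hf, hker⟩ := Submodule.exists_le_ker_of_lt_top _ hspan
  have hconst : ∀ a ∈ s, f a = f a₀ := fun a ha => by
    simpa [sub_eq_zero] using hker (vsub_mem_vectorSpan ℝ ha ha₀)
  rcases le_total (f a₀) (f x) with h | h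
  · exact ⟨LinearMap.toContinuousLinearMap f, by simpa using hf, fun a ha => by simpa [hconst a ha]⟩
  · exact ⟨-LinearMap.toContinuousLinearMap f, by simpa using hf,
      fun a ha => by simpa [hconst a ha]⟩

section LagrangeMultipliers

variable {l : ℕ} (m : ℕ) (μ : Fin l → ℝ)

def SatisfiesConstraints (b : Fin l → ℝ) : Prop :=
  ∀ j : Fin l, ((j : ℕ) < m → b j ≤ μ j) ∧ (m ≤ (j : ℕ) → b j = μ j)

def perturbationSet (S : Set (ℝ × (Fin l → ℝ))) (p : ℝ) : Set (ℝ × (Fin l → ℝ)) :=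
  {z | ∃ s ∈ S, p - s.1 < z.1 ∧ ∀ j : Fin l,
    ((j : ℕ) < m → s.2 j - μ j ≤ z.2 j) ∧ (m ≤ (j : ℕ) → z.2 j = s.2 j - μ j)}

variable {m μ} {S : Set (ℝ × (Fin l → ℝ))} {p : ℝ}

theorem convex_perturbationSet (hS : Convex ℝ S) : Convex ℝ (perturbationSet m μ S p) := by
  rintro z₁ ⟨s₁, hs₁, h₁, h₁j⟩ z₂ ⟨s₂, hs₂, h₂, h₂j⟩ a b ha hb hab
  obtain rfl : b = 1 - a := by linarith
  refine ⟨a • s₁ + (1 - a) • s₂, hS hs₁ hs₂ ha hb hab, ?_, fun j => ⟨fun hj => ?_, fun hj => ?_⟩⟩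
  · simp only [Prod.fst_add, Prod.smul_fst, smul_eq_mul]
    rcases ha.eq_or_lt with rfl | ha
    · simpa using h₂
    · nlinarith [mul_lt_mul_of_pos_left h₁ ha, mul_le_mul_of_nonneg_left h₂.le hb]
  · simp only [Prod.snd_add, Prod.smul_snd, Pi.add_apply, Pi.smul_apply, smul_eq_mul]
    nlinarith [mul_le_mul_of_nonneg_left ((h₁j j).1 hj) ha,
      mul_le_mul_of_nonneg_left ((h₂j j).1 hj) hb]
  · simp only [Prod.snd_add, Prod.smul_snd, Pi.add_apply, Pi.smul_apply, smul_eq_mul,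
      (h₁j j).2 hj, (h₂j j).2 hj]
    ring

theorem zero_notMem_perturbationSet (hp : ∀ s ∈ S, SatisfiesConstraints m μ s.2 → s.1 ≤ p) :
    (0 : ℝ × (Fin l → ℝ)) ∉ perturbationSet m μ S p := by
  rintro ⟨s, hs, h, hj⟩
  have := hp s hs fun j => ⟨fun hjm => by simpa using (hj j).1 hjm,
    fun hjm => by linarith [(hj j).2 hjm, show (0 : ℝ × (Fin l → ℝ)).2 j = 0 from rfl]⟩
  simp only [Prod.fst_zero] at h
  linarith

theorem mk_mem_perturbationSet {s : ℝ × (Fin l → ℝ)} (hs : s ∈ S) {r : ℝ} (hr : 0 < r)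
    {q : Fin l → ℝ} (hq : ∀ j : Fin l, (j : ℕ) < m → 0 ≤ q j)
    (hq' : ∀ j : Fin l, m ≤ (j : ℕ) → q j = 0) :
    (p - s.1 + r, s.2 - μ + q) ∈ perturbationSet m μ S p :=
  ⟨s, hs, by simpa using hr, fun j =>
    ⟨fun hj => by simpa using hq j hj, fun hj => by simp [hq' j hj]⟩⟩

theorem eq_zero_of_forall_sum_sub_mul_nonpos {β : Fin l → ℝ}
    (hβ : ∀ j : Fin l, (j : ℕ) < m → β j ≤ 0) (hS : ∀ s ∈ S, ∑ j, (s.2 j - μ j) * β j ≤ 0)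
    (hslater : ∃ s ∈ S, (∀ j : Fin l, (j : ℕ) < m → s.2 j < μ j) ∧
      ∀ j : Fin l, m ≤ (j : ℕ) → s.2 j = μ j)
    (hinterior : μ ∈ interior {v | ∃ s ∈ S, ∀ j : Fin l, m ≤ (j : ℕ) → v j = s.2 j}) :
    β = 0 := by
  obtain ⟨s₀, hs₀, hlt, heq⟩ := hslater
  have hterm : ∀ j ∈ Finset.univ, 0 ≤ (s₀.2 j - μ j) * β j := fun j _ => by
    rcases lt_or_ge (j : ℕ) m with hj | hj
    · exact mul_nonneg_of_nonpos_of_nonpos (by linarith [hlt j hj]) (hβ j hj)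
    · simp [heq j hj]
  have hineq : ∀ j : Fin l, (j : ℕ) < m → β j = 0 := fun j hj =>
    (mul_eq_zero.1 ((Finset.sum_eq_zero_iff_of_nonneg hterm).1
      ((hS s₀ hs₀).antisymm (Finset.sum_nonneg hterm)) j (Finset.mem_univ j))).resolve_left
      (sub_ne_zero.2 (hlt j hj).ne)
  funext j
  rcases lt_or_ge (j : ℕ) m with hj | hj
  · exact hineq j hj
  -- Moving `μ` along the `j`-th equality constraint stays realizable, so `t ↦ t * β j` is locally
  -- maximal at `0`.
  have hmax : IsLocalMax (fun t : ℝ => t * β j) 0 := by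
    have hcont : Tendsto (fun t : ℝ => μ + (Pi.single j t : Fin l → ℝ)) (𝓝 0) (𝓝 μ) :=
      (continuous_const.add (continuous_single j)).tendsto' 0 μ (by simp)
    filter_upwards [hcont (mem_interior_iff_mem_nhds.1 hinterior)] with t ⟨s, hs, hsv⟩
    beta_reduce at hsv
    have hterm_eq : ∀ i, (s.2 i - μ i) * β i = (Pi.single j t : Fin l → ℝ) i * β i := fun i => by
      rcases lt_or_ge (i : ℕ) m with hi | hi
      · simp [hineq i hi]
      · rw [← hsv i hi, Pi.add_apply, add_sub_cancel_left]
    calc t * β j = ∑ i, (s.2 i - μ i) * β i := by simp [hterm_eq, Pi.single_apply]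
      _ ≤ 0 := hS s hs
      _ = 0 * β j := (zero_mul _).symm
  exact hmax.hasDerivAt_eq_zero (hasDerivAt_mul_const _)

theorem exists_separating_weights (hS : Convex ℝ S)
    (hp : ∀ s ∈ S, SatisfiesConstraints m μ s.2 → s.1 ≤ p) (hne : S.Nonempty) :
    ∃ a : ℝ, ∃ β : Fin l → ℝ, (a, β) ≠ 0 ∧ ∀ s ∈ S, ∀ r : ℝ, 0 < r → ∀ q : Fin l → ℝ,
      (∀ j : Fin l, (j : ℕ) < m → 0 ≤ q j) → (∀ j : Fin l, m ≤ (j : ℕ) → q j = 0) →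
      (p - s.1 + r) * a + ∑ j, (s.2 j - μ j + q j) * β j ≤ 0 := by
  obtain ⟨s₀, hs₀⟩ := hne
  obtain ⟨f, hf, hfC⟩ := exists_dual_ne_zero_le_of_notMem (convex_perturbationSet hS)
    ⟨_, mk_mem_perturbationSet hs₀ one_pos (q := 0) (fun _ _ => le_rfl) fun _ _ => rfl⟩
    (zero_notMem_perturbationSet hp)
  refine ⟨f (1, 0), fun j => f (0, Pi.single j 1), fun h0 => hf ?_, fun s hs r hr q hq hq' => ?_⟩
  · obtain ⟨ha, hβ⟩ := Prod.mk_eq_zero.1 h0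
    refine ContinuousLinearMap.ext fun z => ?_
    simp [dual_prod_pi_apply f z, ha, show ∀ j, f (0, Pi.single j 1) = 0 from congrFun hβ]
  · have := hfC _ (mk_mem_perturbationSet hs hr hq hq')
    rw [dual_prod_pi_apply f, map_zero] at this
    simpa only [Pi.add_apply, Pi.sub_apply] using this

theorem exists_lagrangeMultipliers (hS : Convex ℝ S)
    (hp : ∀ s ∈ S, SatisfiesConstraints m μ s.2 → s.1 ≤ p)
    (hslater : ∃ s ∈ S, (∀ j : Fin l, (j : ℕ) < m → s.2 j < μ j) ∧
      ∀ j : Fin l, m ≤ (j : ℕ) → s.2 j = μ j)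
    (hinterior : μ ∈ interior {v | ∃ s ∈ S, ∀ j : Fin l, m ≤ (j : ℕ) → v j = s.2 j}) :
    ∃ lam ∈ multipliers l m, ∀ s ∈ S, s.1 - ∑ j, lam j * (s.2 j - μ j) ≤ p := by
  obtain ⟨s₀, hs₀, hlt, heq⟩ := hslater
  obtain ⟨a, β, hne, hsep⟩ := exists_separating_weights hS hp ⟨s₀, hs₀⟩
  have hobj : ∀ s ∈ S, (p - s.1) * a + ∑ j, (s.2 j - μ j) * β j ≤ 0 ∧ a ≤ 0 := fun s hs =>
    nonpos_and_nonpos_of_forall_add_mul_nonpos fun t ht => by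
      have := hsep s hs t ht 0 (fun _ _ => le_rfl) fun _ _ => rfl
      simp only [Pi.zero_apply, add_zero] at this
      linarith
  have hβ : ∀ j : Fin l, (j : ℕ) < m → β j ≤ 0 := fun j hj => by
    refine (nonpos_and_nonpos_of_forall_add_mul_nonpos
      (a := (p - s₀.1 + 1) * a + ∑ i, (s₀.2 i - μ i) * β i) fun t ht => ?_).2
    have := hsep s₀ hs₀ 1 one_pos (Pi.single j t)
      (fun i _ => by rcases eq_or_ne i j with rfl | h; exacts [by simpa using ht.le, by simp [h]])
      (fun i hi => Pi.single_eq_of_ne (by rintro rfl; omega) _)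
    simp only [add_mul, Finset.sum_add_distrib, Pi.single_apply, ite_mul, zero_mul,
      Finset.sum_ite_eq', Finset.mem_univ, if_true] at this
    linarith
  have ha : a < 0 := by
    refine (hobj s₀ hs₀).2.lt_of_ne fun ha => hne ?_
    rw [ha, eq_zero_of_forall_sum_sub_mul_nonpos hβ (fun s hs => by simpa [ha] using (hobj s hs).1)
      ⟨s₀, hs₀, hlt, heq⟩ hinterior, Prod.mk_zero_zero]
  refine ⟨fun j => β j / a, fun j hj => div_nonneg_of_nonpos (hβ j hj) ha.le, fun s hs => ?_⟩
  have hsum : ∑ j, β j / a * (s.2 j - μ j) = (∑ j, (s.2 j - μ j) * β j) / a := by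
    rw [Finset.sum_div]
    exact Finset.sum_congr rfl fun j _ => by ring
  have := (hobj s hs).1
  rw [hsum, sub_le_iff_le_add, ← sub_le_iff_le_add', le_div_iff_of_neg ha]
  linarith

end LagrangeMultipliers

section ValueFunctions

variable {α : Type*} {l : ℕ} (m : ℕ) (μ : Fin l → ℝ) (𝓛 : Set α) (F₀ : α → ℝ)
  (F : α → Fin l → ℝ)

def lagrangian (lam : Fin l → ℝ) (L : α) : ℝ :=
  F₀ L - ∑ j, lam j * (F L j - μ j)

def primalValue : EReal :=
  sSup ((fun L => (F₀ L : EReal)) '' {L ∈ 𝓛 | SatisfiesConstraints m μ (F L)})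

def dualValue : EReal :=
  ⨅ lam ∈ multipliers l m, sSup ((fun L => (lagrangian μ F₀ F lam L : EReal)) '' 𝓛)

theorem primalValue_le_dualValue : primalValue m μ 𝓛 F₀ F ≤ dualValue m μ 𝓛 F₀ F := by
  refine le_iInf₂ fun lam hlam => sSup_le ?_
  rintro _ ⟨L, ⟨hL, hfeas⟩, rfl⟩
  refine le_sSup_of_le ⟨L, hL, rfl⟩ (EReal.coe_le_coe_iff.2 ?_)
  have : ∑ j, lam j * (F L j - μ j) ≤ 0 := Finset.sum_nonpos fun j _ => by
    rcases lt_or_ge (j : ℕ) m with hj | hj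
    · exact mul_nonpos_of_nonneg_of_nonpos (hlam j hj) (by linarith [(hfeas j).1 hj])
    · simp [(hfeas j).2 hj]
  simp only [lagrangian]
  linarith

theorem primalValue_eq_dualValue (hconv : Convex ℝ ((fun L => (F₀ L, F L)) '' 𝓛))
    (hslater : ∃ L₀ ∈ 𝓛, (∀ j : Fin l, (j : ℕ) < m → F L₀ j < μ j) ∧
      ∀ j : Fin l, m ≤ (j : ℕ) → F L₀ j = μ j)
    (hinterior : μ ∈ interior {v | ∃ L ∈ 𝓛, ∀ j : Fin l, m ≤ (j : ℕ) → v j = F L j}) :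
    primalValue m μ 𝓛 F₀ F = dualValue m μ 𝓛 F₀ F := by
  refine (primalValue_le_dualValue m μ 𝓛 F₀ F).antisymm ?_
  obtain ⟨L₀, hL₀, hlt, heq⟩ := hslater
  have hbot : primalValue m μ 𝓛 F₀ F ≠ ⊥ := ne_bot_of_le_ne_bot (EReal.coe_ne_bot (F₀ L₀))
    (le_sSup ⟨L₀, ⟨hL₀, fun j => ⟨fun hj => (hlt j hj).le, heq j⟩⟩, rfl⟩)
  rcases eq_or_ne (primalValue m μ 𝓛 F₀ F) ⊤ with htop | htop
  · simp [htop]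
  set p := (primalValue m μ 𝓛 F₀ F).toReal
  have hp_eq : (p : EReal) = primalValue m μ 𝓛 F₀ F := EReal.coe_toReal htop hbot
  have hp : ∀ L ∈ 𝓛, SatisfiesConstraints m μ (F L) → F₀ L ≤ p := fun L hL hfeas => by
    rw [← EReal.coe_le_coe_iff, hp_eq]
    exact le_sSup ⟨L, ⟨hL, hfeas⟩, rfl⟩
  obtain ⟨lam, hlam, hlag⟩ := exists_lagrangeMultipliers hconv
    (Set.forall_mem_image.2 hp) ⟨_, ⟨L₀, hL₀, rfl⟩, hlt, heq⟩
    (by simpa only [Set.exists_mem_image] using hinterior)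
  calc dualValue m μ 𝓛 F₀ F
      ≤ sSup ((fun L => (lagrangian μ F₀ F lam L : EReal)) '' 𝓛) := iInf₂_le lam hlam
    _ ≤ p := sSup_le <| Set.forall_mem_image.2 fun L hL =>
        EReal.coe_le_coe_iff.2 (hlag _ ⟨L, hL, rfl⟩)
    _ = primalValue m μ 𝓛 F₀ F := hp_eq

end ValueFunctions

theorem Eg_mul_convex_combination {𝒳 : Set (Fin N → ℝ)} {g ψ L₁ L₂ : (Fin N → ℝ) → ℝ}
    (h₁ : IntegrableOn (fun x => ψ x * L₁ x * g x) 𝒳)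
    (h₂ : IntegrableOn (fun x => ψ x * L₂ x * g x) 𝒳) (t : ℝ) :
    Eg 𝒳 g (fun x => ψ x * (t * L₁ x + (1 - t) * L₂ x)) =
      t * Eg 𝒳 g (fun x => ψ x * L₁ x) + (1 - t) * Eg 𝒳 g (fun x => ψ x * L₂ x) := by
  simp only [Eg, ← integral_const_mul, ← integral_add (h₁.const_mul t) (h₂.const_mul (1 - t))]
  congr 1
  funext x
  ring

theorem convex_image_moments {𝒳 : Set (Fin N → ℝ)} {g φ0 : (Fin N → ℝ) → ℝ} {l : ℕ}
    {φ : Fin l → (Fin N → ℝ) → ℝ} {𝓛 : Set ((Fin N → ℝ) → ℝ)}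
    (hint0 : ∀ L ∈ 𝓛, IntegrableOn (fun x => φ0 x * L x * g x) 𝒳)
    (hint : ∀ L ∈ 𝓛, ∀ j : Fin l, IntegrableOn (fun x => φ j x * L x * g x) 𝒳)
    (hconv : ∀ L1 ∈ 𝓛, ∀ L2 ∈ 𝓛, ∀ t : ℝ, 0 ≤ t → t ≤ 1 →
      (fun x => t * L1 x + (1 - t) * L2 x) ∈ 𝓛) :
    Convex ℝ ((fun L => (Eg 𝒳 g (fun x => φ0 x * L x),
      fun j => Eg 𝒳 g (fun x => φ j x * L x))) '' 𝓛) := by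
  rintro _ ⟨L₁, hL₁, rfl⟩ _ ⟨L₂, hL₂, rfl⟩ a b ha hb hab
  obtain rfl : b = 1 - a := by linarith
  refine ⟨_, hconv L₁ hL₁ L₂ hL₂ a ha (by linarith), ?_⟩
  ext j
  · simp [Eg_mul_convex_combination (hint0 L₁ hL₁) (hint0 L₂ hL₂)]
  · simp [Eg_mul_convex_combination (hint L₁ hL₁ j) (hint L₂ hL₂ j)]

theorem strong_duality_general
    (𝒳 : Set (Fin N → ℝ))
    (g : (Fin N → ℝ) → ℝ)
    (l m : ℕ)
    (φ0 : (Fin N → ℝ) → ℝ) (φ : Fin l → (Fin N → ℝ) → ℝ) (μc : Fin l → ℝ)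
    (𝓛 : Set ((Fin N → ℝ) → ℝ))
    -- Assumption 1 (integrability):
    (hint0 : ∀ L ∈ 𝓛, IntegrableOn (fun x => φ0 x * L x * g x) 𝒳)
    (hint : ∀ L ∈ 𝓛, ∀ j : Fin l, IntegrableOn (fun x => φ j x * L x * g x) 𝒳)
    -- Assumption 2 (convexity):
    (hconv : ∀ L1 ∈ 𝓛, ∀ L2 ∈ 𝓛, ∀ t : ℝ, 0 ≤ t → t ≤ 1 →
      (fun x => t * L1 x + (1 - t) * L2 x) ∈ 𝓛)
    -- Assumption 3 (Slater condition):
    (hslater : ∃ L0 ∈ 𝓛,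
      (∀ j : Fin l, (j : ℕ) < m → Eg 𝒳 g (fun x => φ j x * L0 x) < μc j) ∧
      (∀ j : Fin l, m ≤ (j : ℕ) → Eg 𝒳 g (fun x => φ j x * L0 x) = μc j))
    (hinterior : (fun j : Fin l => μc j) ∈
      interior {v : Fin l → ℝ | ∃ L ∈ 𝓛,
        ∀ j : Fin l, m ≤ (j : ℕ) → v j = Eg 𝒳 g (fun x => φ j x * L x)}) :
    valP 𝒳 g m φ0 φ μc 𝓛 = valD 𝒳 g m φ0 φ μc 𝓛 :=
  -- `valP` and `valD` are, by definition, `primalValue` and `dualValue` of the moment maps.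
  primalValue_eq_dualValue m μc 𝓛 _ _ (convex_image_moments hint0 hint hconv) hslater hinterior

/-- **Theorem 1 (strong duality)**: under Assumptions 1 (integrability),
2 (convexity of `𝓛`) and 3 (Slater condition), `val(P) = val(D)`. -/
theorem strong_duality
    (𝒳 : Set (Fin N → ℝ)) (h𝒳 : MeasurableSet 𝒳)
    (g : (Fin N → ℝ) → ℝ) (hg_meas : Measurable g)
    (hg_pos : ∀ x ∈ 𝒳, 0 < g x) (hg_prob : ∫ x in 𝒳, g x = 1)
    (l m : ℕ) (hml : m ≤ l)
    (φ0 : (Fin N → ℝ) → ℝ) (φ : Fin l → (Fin N → ℝ) → ℝ) (μc : Fin l → ℝ)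
    (hφ0_meas : Measurable φ0) (hφ_meas : ∀ j, Measurable (φ j))
    (𝓛 : Set ((Fin N → ℝ) → ℝ))
    (h𝓛_meas : ∀ L ∈ 𝓛, Measurable L) (h𝓛_nonneg : ∀ L ∈ 𝓛, ∀ x ∈ 𝒳, 0 ≤ L x)
    -- Assumption 1 (integrability):
    (hint0 : ∀ L ∈ 𝓛, IntegrableOn (fun x => φ0 x * L x * g x) 𝒳)
    (hint : ∀ L ∈ 𝓛, ∀ j : Fin l, IntegrableOn (fun x => φ j x * L x * g x) 𝒳)
    -- Assumption 2 (convexity):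
    (hconv : ∀ L1 ∈ 𝓛, ∀ L2 ∈ 𝓛, ∀ t : ℝ, 0 ≤ t → t ≤ 1 →
      (fun x => t * L1 x + (1 - t) * L2 x) ∈ 𝓛)
    -- Assumption 3 (Slater condition):
    (hslater : ∃ L0 ∈ 𝓛,
      (∀ j : Fin l, (j : ℕ) < m → Eg 𝒳 g (fun x => φ j x * L0 x) < μc j) ∧
      (∀ j : Fin l, m ≤ (j : ℕ) → Eg 𝒳 g (fun x => φ j x * L0 x) = μc j))
    (hinterior : (fun j : Fin l => μc j) ∈
      interior {v : Fin l → ℝ | ∃ L ∈ 𝓛,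
        ∀ j : Fin l, m ≤ (j : ℕ) → v j = Eg 𝒳 g (fun x => φ j x * L x)}) :
    valP 𝒳 g m φ0 φ μc 𝓛 = valD 𝒳 g m φ0 φ μc 𝓛 :=
  strong_duality_general 𝒳 g l m φ0 φ μc 𝓛 hint0 hint hconv hslater hinterior

end ShapeDRO
end
end

section
/- Perturbation bound for parametric Lagrangian dual values: under assumptions (i)–(iii), inf_{λ ∈ Λ} C̃(λ) is finite and | inf_{λ ∈ Λ} C(λ) − inf_{λ ∈ Λ} C̃(λ) | ≤ sup_{i∈I} |a_i − c_i| + M · sup_{i∈I} |b_i − d_i| ≤ sup_{i∈I} |a_i − c_i| + M · Σ_{j=1}^{l} sup_{i∈I} |b_{ij} − d_{ij}|, where M = max( |λ*|, ( C(λ*) − η_2 + 2 sup_{i∈I} |a_i − c_i| + |λ*| sup_{i∈I} |b_i − d_i| ) / ( η_1 − sup_{i∈I} |b_i − d_i| ) ). -/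
/-!
On `Λ` the unperturbed and perturbed dual functions differ by at most `sup|aᵢ - cᵢ| + |λ| sup|bᵢ - dᵢ|`.
This gives `inf C̃ ≤ C̃(λ*) ≤ C(λ*) + sup|aᵢ - cᵢ| + M sup|bᵢ - dᵢ|` at once. For the reverse
inequality one splits `Λ` at the radius `M`: on the ball `|λ| ≤ M` the same comparison works, while
outside it the index whose sign pattern opposes that of `λ` makes `C̃` grow at least like
`η₂ - sup|aᵢ - cᵢ| + (η₁ - sup|bᵢ - dᵢ|) |λ|`, and the choice of `M` makes this large enough.
-/

open Filter Set

noncomputable section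

namespace LagrangePerturb

/-- The multiplier set `Λ = ℝ₊^m × ℝ^{l-m}` inside Euclidean `ℝ^l`. -/
def multipliers (l m : ℕ) : Set (EuclideanSpace ℝ (Fin l)) :=
  {lam | ∀ j : Fin l, (j : ℕ) < m → 0 ≤ lam j}

/-- `C(λ) = sup_{i ∈ I} (a_i - λᵀ b_i)`, valued in `(-∞, ∞]` (as `EReal`). -/
def C {l : ℕ} {I : Type*} (a : I → ℝ) (b : I → EuclideanSpace ℝ (Fin l))
    (lam : EuclideanSpace ℝ (Fin l)) : EReal :=
  ⨆ i : I, ((a i - ∑ j : Fin l, lam j * b i j : ℝ) : EReal)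

open scoped RealInnerProductSpace

section Euclidean

variable {ι : Type*} [Fintype ι]

lemma norm_le_sum_abs_apply (x : EuclideanSpace ℝ ι) : ‖x‖ ≤ ∑ i, |x i| := by
  have hnonneg : ∀ i ∈ Finset.univ, 0 ≤ |x i| := fun i _ => abs_nonneg _
  rw [EuclideanSpace.norm_eq, ← Real.sqrt_sq (Finset.sum_nonneg hnonneg)]
  refine Real.sqrt_le_sqrt ?_
  simpa only [Real.norm_eq_abs, sq_abs] using Finset.sum_sq_le_sq_sum_of_nonneg hnonneg

lemma sum_mul_eq_inner (u x : EuclideanSpace ℝ ι) : ∑ i, u i * x i = ⟪u, x⟫ := by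
  simp [PiLp.inner_apply, mul_comm]

lemma abs_sum_mul_sub_sum_mul_le (u x y : EuclideanSpace ℝ ι) :
    |∑ i, u i * x i - ∑ i, u i * y i| ≤ ‖u‖ * ‖x - y‖ := by
  rw [sum_mul_eq_inner, sum_mul_eq_inner, ← inner_sub_right]
  exact abs_real_inner_le_norm u (x - y)

lemma iSup_norm_le_sum_iSup_abs_apply {I : Type*} (x : I → EuclideanSpace ℝ ι)
    (hx : BddAbove (Set.range fun i => ‖x i‖)) :
    ⨆ i, ‖x i‖ ≤ ∑ j, ⨆ i, |x i j| := by
  obtain ⟨K, hK⟩ := hx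
  have hbdd : ∀ j, BddAbove (Set.range fun i => |x i j|) := fun j =>
    ⟨K, Set.forall_mem_range.2 fun i => (PiLp.norm_apply_le (x i) j).trans (hK ⟨i, rfl⟩)⟩
  refine Real.iSup_le (fun i => ?_) <|
    Finset.sum_nonneg fun j _ => Real.iSup_nonneg fun i => abs_nonneg (x i j)
  exact (norm_le_sum_abs_apply (x i)).trans <|
    Finset.sum_le_sum fun j _ => le_ciSup (hbdd j) i

end Euclidean

lemma abs_sub_toReal_biInf_le {X : Type*} {S : Set X} {g : X → EReal} {V ε : ℝ}
    (hlower : ∀ x ∈ S, ((V - ε : ℝ) : EReal) ≤ g x) {x₀ : X} (hx₀ : x₀ ∈ S)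
    (hupper : g x₀ ≤ ((V + ε : ℝ) : EReal)) :
    (⨅ x ∈ S, g x) ≠ ⊤ ∧ (⨅ x ∈ S, g x) ≠ ⊥ ∧ |V - (⨅ x ∈ S, g x).toReal| ≤ ε := by
  have hlo : ((V - ε : ℝ) : EReal) ≤ ⨅ x ∈ S, g x := le_iInf₂ hlower
  have hhi : ⨅ x ∈ S, g x ≤ ((V + ε : ℝ) : EReal) := (iInf₂_le x₀ hx₀).trans hupper
  have htop : (⨅ x ∈ S, g x) ≠ ⊤ := (hhi.trans_lt (EReal.coe_lt_top _)).ne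
  have hbot : (⨅ x ∈ S, g x) ≠ ⊥ := ((EReal.bot_lt_coe _).trans_le hlo).ne'
  refine ⟨htop, hbot, ?_⟩
  rw [← EReal.coe_toReal htop hbot] at hlo hhi
  rw [abs_sub_le_iff]
  constructor <;> linarith [EReal.coe_le_coe_iff.1 hlo, EReal.coe_le_coe_iff.1 hhi]

section DualFunction

variable {l m : ℕ} {I : Type*}

lemma C_le_C_add {a c : I → ℝ} {b d : I → EuclideanSpace ℝ (Fin l)} {A B : ℝ}
    (hA : ∀ i, |a i - c i| ≤ A) (hB : ∀ i, ‖b i - d i‖ ≤ B) (lam : EuclideanSpace ℝ (Fin l)) :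
    C c d lam ≤ C a b lam + ((A + ‖lam‖ * B : ℝ) : EReal) := by
  refine iSup_le fun i => ?_
  have hi : c i - ∑ j, lam j * d i j ≤ a i - ∑ j, lam j * b i j + (A + ‖lam‖ * B) := by
    have hdot := (abs_le.1 (abs_sum_mul_sub_sum_mul_le lam (b i) (d i))).2
    have hnorm := mul_le_mul_of_nonneg_left (hB i) (norm_nonneg lam)
    linarith [(abs_le.1 (hA i)).1]
  calc ((c i - ∑ j, lam j * d i j : ℝ) : EReal)
      ≤ ((a i - ∑ j, lam j * b i j : ℝ) : EReal) + ((A + ‖lam‖ * B : ℝ) : EReal) := by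
        exact_mod_cast hi
    _ ≤ C a b lam + ((A + ‖lam‖ * B : ℝ) : EReal) := by
        gcongr
        exact le_iSup (fun i => ((a i - ∑ j, lam j * b i j : ℝ) : EReal)) i

lemma mul_apply_eq_neg_abs_mul_abs {lam β : EuclideanSpace ℝ (Fin l)} {δ : ℝ} (hδ : 0 ≤ δ)
    (hlam : lam ∈ multipliers l m) (hneg : ∀ k : Fin l, (k : ℕ) < m → β k < 0)
    (hsign : ∀ k : Fin l, m ≤ (k : ℕ) → β k = if lam k < 0 then δ else -δ) (k : Fin l) :
    lam k * β k = -(|lam k| * |β k|) := by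
  by_cases hk : (k : ℕ) < m
  · rw [abs_of_nonneg (hlam k hk), abs_of_neg (hneg k hk)]
    ring
  rw [hsign k (not_lt.1 hk)]
  split_ifs with hlk
  · rw [abs_of_neg hlk, abs_of_nonneg hδ]
    ring
  · rw [abs_of_nonneg (not_lt.1 hlk), abs_neg, abs_of_nonneg hδ]
    ring

lemma sum_mul_le_neg_mul_norm {lam β : EuclideanSpace ℝ (Fin l)} {δ η : ℝ} (hδ : 0 ≤ δ)
    (hlam : lam ∈ multipliers l m) (hneg : ∀ k : Fin l, (k : ℕ) < m → β k < 0)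
    (hsign : ∀ k : Fin l, m ≤ (k : ℕ) → β k = if lam k < 0 then δ else -δ)
    (hη : 0 ≤ η) (hβ : ∀ k, η ≤ |β k|) :
    ∑ k, lam k * β k ≤ -(η * ‖lam‖) := by
  calc ∑ k, lam k * β k = -∑ k, |lam k| * |β k| := by
        rw [← Finset.sum_neg_distrib]
        exact Finset.sum_congr rfl fun k _ => mul_apply_eq_neg_abs_mul_abs hδ hlam hneg hsign k
    _ ≤ -∑ k, η * |lam k| :=
        neg_le_neg <| Finset.sum_le_sum fun k _ => by
          rw [mul_comm]; exact mul_le_mul_of_nonneg_left (hβ k) (abs_nonneg _)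
    _ ≤ -(η * ‖lam‖) := by
        rw [← Finset.mul_sum]
        exact neg_le_neg <| mul_le_mul_of_nonneg_left (norm_le_sum_abs_apply lam) hη

lemma coe_le_C_of_sign_patterns {a c : I → ℝ} {b d : I → EuclideanSpace ℝ (Fin l)}
    {A B δ η₁ η₂ : ℝ} (hA : ∀ i, |a i - c i| ≤ A) (hB : ∀ i, ‖b i - d i‖ ≤ B) (hδ : 0 ≤ δ)
    (idx : (Fin l → Bool) → I)
    (hidx : ∀ σ : Fin l → Bool,
      (∀ k : Fin l, (k : ℕ) < m → b (idx σ) k < 0) ∧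
      (∀ k : Fin l, m ≤ (k : ℕ) → b (idx σ) k = (if σ k then δ else -δ)))
    (hη₁ : 0 ≤ η₁) (hη₁b : ∀ σ k, η₁ ≤ |b (idx σ) k|) (hη₂a : ∀ σ, η₂ ≤ a (idx σ))
    {lam : EuclideanSpace ℝ (Fin l)} (hlam : lam ∈ multipliers l m) :
    ((η₂ - A + (η₁ - B) * ‖lam‖ : ℝ) : EReal) ≤ C c d lam := by
  set σ : Fin l → Bool := fun k => decide (lam k < 0)
  have hgrow : ∑ k, lam k * b (idx σ) k ≤ -(η₁ * ‖lam‖) :=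
    sum_mul_le_neg_mul_norm hδ hlam (hidx σ).1 (fun k hk => by simpa [σ] using (hidx σ).2 k hk)
      hη₁ (hη₁b σ)
  refine le_iSup_of_le (idx σ) (EReal.coe_le_coe_iff.2 ?_)
  have hdot := (abs_le.1 (abs_sum_mul_sub_sum_mul_le lam (b (idx σ)) (d (idx σ)))).1
  have hnorm := mul_le_mul_of_nonneg_left (hB (idx σ)) (norm_nonneg lam)
  linarith [(abs_le.1 (hA (idx σ))).2, hη₂a σ]

lemma coe_sub_le_C_of_coercive {a c : I → ℝ} {b d : I → EuclideanSpace ℝ (Fin l)}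
    {A B M V η₁ η₂ : ℝ} (hA : ∀ i, |a i - c i| ≤ A) (hB : ∀ i, ‖b i - d i‖ ≤ B) (hB₀ : 0 ≤ B)
    (hBη₁ : B ≤ η₁) (hM : V - η₂ ≤ η₁ * M) {lam : EuclideanSpace ℝ (Fin l)}
    (hV : (V : EReal) ≤ C a b lam)
    (hcoer : ((η₂ - A + (η₁ - B) * ‖lam‖ : ℝ) : EReal) ≤ C c d lam) :
    ((V - (A + M * B) : ℝ) : EReal) ≤ C c d lam := by
  rcases le_or_gt ‖lam‖ M with hsmall | hlarge
  · have hcomp : (V : EReal) ≤ C c d lam + ((A + ‖lam‖ * B : ℝ) : EReal) :=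
      hV.trans <| C_le_C_add (fun i => abs_sub_comm (c i) (a i) ▸ hA i)
        (fun i => norm_sub_rev (d i) (b i) ▸ hB i) lam
    calc ((V - (A + M * B) : ℝ) : EReal) ≤ ((V - (A + ‖lam‖ * B) : ℝ) : EReal) :=
          EReal.coe_le_coe_iff.2 (by linarith [mul_le_mul_of_nonneg_right hsmall hB₀])
      _ ≤ C c d lam := by
          rw [EReal.coe_sub]
          exact EReal.sub_le_of_le_add hcomp
  · refine le_trans (EReal.coe_le_coe_iff.2 ?_) hcoer
    linarith [mul_le_mul_of_nonneg_left hlarge.le (sub_nonneg.2 hBη₁)]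

end DualFunction

theorem perturbation_bound_general {l m : ℕ}
    {I : Type*}
    (a c : I → ℝ) (b d : I → EuclideanSpace ℝ (Fin l))
    -- (i) a finite minimizer λ* of C over Λ:
    (lamstar : EuclideanSpace ℝ (Fin l)) (hlam : lamstar ∈ multipliers l m)
    (hCfin_top : C a b lamstar ≠ ⊤) (hCfin_bot : C a b lamstar ≠ ⊥)
    (hmin : ∀ lam ∈ multipliers l m, C a b lamstar ≤ C a b lam)
    -- (ii) indices realizing all sign patterns on the equality coordinates:
    (δ : ℝ) (hδ : 0 < δ) (idx : (Fin l → Bool) → I)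
    (hidx : ∀ σ : Fin l → Bool,
      (∀ k : Fin l, (k : ℕ) < m → b (idx σ) k < 0) ∧
      (∀ k : Fin l, m ≤ (k : ℕ) → b (idx σ) k = (if σ k then δ else -δ)))
    -- the constants η₁, η₂, and the suprema of the perturbations:
    (η1 η2 supA supB : ℝ)
    (hη1 : η1 = ⨅ σ : Fin l → Bool, ⨅ k : Fin l, |b (idx σ) k|)
    (hη2 : η2 = ⨅ σ : Fin l → Bool, a (idx σ))
    (hsupA : supA = ⨆ i : I, |a i - c i|)
    (hsupB : supB = ⨆ i : I, ‖b i - d i‖)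
    -- (iii) the perturbations are finite (bounded), with `sup |b_i - d_i| < η₁`:
    (hbddA : BddAbove (Set.range fun i : I => |a i - c i|))
    (hbddB : BddAbove (Set.range fun i : I => ‖b i - d i‖))
    (hBlt : supB < η1)
    -- the constant M:
    (M : ℝ)
    (hM : M = max ‖lamstar‖
      (((C a b lamstar).toReal - η2 + 2 * supA + ‖lamstar‖ * supB) / (η1 - supB))) :
    (⨅ lam ∈ multipliers l m, C c d lam) ≠ ⊤ ∧
    (⨅ lam ∈ multipliers l m, C c d lam) ≠ ⊥ ∧
    |(⨅ lam ∈ multipliers l m, C a b lam).toReal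
      - (⨅ lam ∈ multipliers l m, C c d lam).toReal| ≤ supA + M * supB ∧
    |(⨅ lam ∈ multipliers l m, C a b lam).toReal
      - (⨅ lam ∈ multipliers l m, C c d lam).toReal|
      ≤ supA + M * ∑ j : Fin l, ⨆ i : I, |b i j - d i j| := by
  have hA : ∀ i, |a i - c i| ≤ supA := fun i => hsupA ▸ le_ciSup hbddA i
  have hB : ∀ i, ‖b i - d i‖ ≤ supB := fun i => hsupB ▸ le_ciSup hbddB i
  have hA₀ : 0 ≤ supA := hsupA ▸ Real.iSup_nonneg fun i => abs_nonneg (a i - c i)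
  have hB₀ : 0 ≤ supB := hsupB ▸ Real.iSup_nonneg fun i => norm_nonneg (b i - d i)
  have hlamM : ‖lamstar‖ ≤ M := hM ▸ le_max_left _ _
  have hM₀ : 0 ≤ M := (norm_nonneg lamstar).trans hlamM
  set V := (C a b lamstar).toReal
  have hV : C a b lamstar = V := (EReal.coe_toReal hCfin_top hCfin_bot).symm
  have hMV : V - η2 ≤ η1 * M := by
    have hfrac := hM ▸ le_max_right ‖lamstar‖ ((V - η2 + 2 * supA + ‖lamstar‖ * supB) / (η1 - supB))
    rw [div_le_iff₀ (sub_pos.2 hBlt)] at hfrac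
    linarith [mul_nonneg (norm_nonneg lamstar) hB₀, mul_nonneg hM₀ hB₀]
  have hη1b : ∀ σ k, η1 ≤ |b (idx σ) k| := fun σ k => hη1 ▸
    (ciInf_le (finite_range _).bddBelow σ).trans (ciInf_le (finite_range _).bddBelow k)
  have hη2a : ∀ σ, η2 ≤ a (idx σ) := fun σ => hη2 ▸ ciInf_le (finite_range _).bddBelow σ
  have hlower : ∀ lam ∈ multipliers l m, ((V - (supA + M * supB) : ℝ) : EReal) ≤ C c d lam :=
    fun lam hl => coe_sub_le_C_of_coercive hA hB hB₀ hBlt.le hMV (hV ▸ hmin lam hl)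
      (coe_le_C_of_sign_patterns hA hB hδ.le idx hidx (hB₀.trans hBlt.le) hη1b hη2a hl)
  have hupper : C c d lamstar ≤ ((V + (supA + M * supB) : ℝ) : EReal) := by
    refine (C_le_C_add hA hB lamstar).trans ?_
    rw [hV, ← EReal.coe_add, EReal.coe_le_coe_iff]
    linarith [mul_le_mul_of_nonneg_right hlamM hB₀]
  obtain ⟨htop, hbot, hbound⟩ := abs_sub_toReal_biInf_le hlower hlam hupper
  have hinf : (⨅ lam ∈ multipliers l m, C a b lam) = C a b lamstar :=
    le_antisymm (iInf₂_le lamstar hlam) (le_iInf₂ hmin)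
  rw [hinf]
  refine ⟨htop, hbot, hbound, hbound.trans ?_⟩
  gcongr
  exact hsupB ▸ iSup_norm_le_sum_iSup_abs_apply (fun i => b i - d i) hbddB

/-- **Lemma 2 (perturbation bound for parametric Lagrangian dual values)**. -/
theorem perturbation_bound {l m : ℕ} (hml : m ≤ l)
    {I : Type*} [Nonempty I]
    (a c : I → ℝ) (b d : I → EuclideanSpace ℝ (Fin l))
    -- (i) a finite minimizer λ* of C over Λ:
    (lamstar : EuclideanSpace ℝ (Fin l)) (hlam : lamstar ∈ multipliers l m)
    (hCfin_top : C a b lamstar ≠ ⊤) (hCfin_bot : C a b lamstar ≠ ⊥)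
    (hmin : ∀ lam ∈ multipliers l m, C a b lamstar ≤ C a b lam)
    -- (ii) indices realizing all sign patterns on the equality coordinates:
    (δ : ℝ) (hδ : 0 < δ) (idx : (Fin l → Bool) → I)
    (hidx : ∀ σ : Fin l → Bool,
      (∀ k : Fin l, (k : ℕ) < m → b (idx σ) k < 0) ∧
      (∀ k : Fin l, m ≤ (k : ℕ) → b (idx σ) k = (if σ k then δ else -δ)))
    -- the constants η₁, η₂, and the suprema of the perturbations:
    (η1 η2 supA supB : ℝ)
    (hη1 : η1 = ⨅ σ : Fin l → Bool, ⨅ k : Fin l, |b (idx σ) k|)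
    (hη2 : η2 = ⨅ σ : Fin l → Bool, a (idx σ))
    (hsupA : supA = ⨆ i : I, |a i - c i|)
    (hsupB : supB = ⨆ i : I, ‖b i - d i‖)
    -- (iii) the perturbations are finite (bounded), with `sup |b_i - d_i| < η₁`:
    (hbddA : BddAbove (Set.range fun i : I => |a i - c i|))
    (hbddB : BddAbove (Set.range fun i : I => ‖b i - d i‖))
    (hBlt : supB < η1)
    -- the constant M:
    (M : ℝ)
    (hM : M = max ‖lamstar‖
      (((C a b lamstar).toReal - η2 + 2 * supA + ‖lamstar‖ * supB) / (η1 - supB))) :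
    (⨅ lam ∈ multipliers l m, C c d lam) ≠ ⊤ ∧
    (⨅ lam ∈ multipliers l m, C c d lam) ≠ ⊥ ∧
    |(⨅ lam ∈ multipliers l m, C a b lam).toReal
      - (⨅ lam ∈ multipliers l m, C c d lam).toReal| ≤ supA + M * supB ∧
    |(⨅ lam ∈ multipliers l m, C a b lam).toReal
      - (⨅ lam ∈ multipliers l m, C c d lam).toReal|
      ≤ supA + M * ∑ j : Fin l, ⨆ i : I, |b i j - d i j| :=
  perturbation_bound_general a c b d lamstar hlam hCfin_top hCfin_bot hmin δ hδ idx hidx η1 η2 supA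
    supB hη1 hη2 hsupA hsupB hbddA hbddB hBlt M hM

end LagrangePerturb
end
end

section
/- Monotonicity in dimension of the expected number of non-redundant constraints: for all d ≥ 2 and all n, (1/2) E[N_2(n, d−1)] ≤ E[N_2(n, d)] ≤ n(n−1)/2^d, where N_2(n, d−1) is the analogous count for i.i.d. samples from any product of d−1 atomless probability distributions on ℝ^{d−1}. Equivalently, with S(n,d) := n(n−1) Σ_{k=0}^{n−2} binom(n−2,k)(−1)^k/((k+1)^d(k+2)^d), one has S(n,d−1)/2 ≤ S(n,d) ≤ n(n−1)/2^d for all d ≥ 2. -/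
/-!
`N2count` only sees the coordinatewise order, and quantile transforms `u ↦ Q_c u` are strictly
increasing on `(0,1)` and push the uniform law on `(0,1)` to an atomless `ν c`; so the expected
count is the same for every atomless product law, and we may compute with uniform samples.

The count is a sum over ordered pairs `(i, j)`. In dimension `d + 1` a pair is non-redundant as
soon as it is non-redundant for the last `d` coordinates and `X_j ≤ X_i` in the first one; these
events are independent and the second has probability `1/2`, which gives the lower bound. A
non-redundant pair is dominated, an event of probability `2⁻ᵈ`, which gives the upper bound.

For the closed form, `S n d = n (n - 1) sPoly (n - 2) d 1`. Since
`∫₀¹ (1 - t) tᵏ dt = 1 / ((k + 1) (k + 2))`, `sPoly N (e + 1) x = ∫₀¹ (1 - t) sPoly N e (x t) dt`,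
so by induction every `sPoly N e` is antitone on `[0, 1]`; comparing `sPoly N e 1` with
`sPoly N e 0 = 2⁻ᵉ` and with `sPoly N (e + 1) 1` gives the two inequalities for `S`.
-/

open MeasureTheory Filter Set

noncomputable section

namespace OrthoConstraints

/-- The number of non-redundant orthounimodality constraints generated by the
points `Y 1, …, Y n`. -/
def N2count {d : ℕ} {n : ℕ} (Y : Fin n → (Fin d → ℝ)) : ℕ :=
  Set.ncard {p : Fin n × Fin n | p.1 ≠ p.2 ∧ (∀ c, Y p.2 c ≤ Y p.1 c) ∧
    ¬ ∃ k : Fin n, k ≠ p.1 ∧ k ≠ p.2 ∧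
      (∀ c, Y k c ≤ Y p.1 c) ∧ (∀ c, Y p.2 c ≤ Y k c)}

/-- The closed-form expression
`S(n,d) = n(n-1) ∑_{k=0}^{n-2} C(n-2,k)(-1)^k/((k+1)^d (k+2)^d)` for the
expected number of non-redundant constraints. -/
def S (n d : ℕ) : ℝ :=
  n * ((n : ℝ) - 1) * ∑ k ∈ Finset.range (n - 1),
    ((n - 2).choose k : ℝ) * (-1) ^ k / ((k + 1) ^ d * (k + 2) ^ d)

open ProbabilityTheory

def uniformIoo : Measure ℝ := volume.restrict (Ioo 0 1)

instance : IsProbabilityMeasure uniformIoo :=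
  ⟨by simp [uniformIoo]⟩

instance : NullSingletonClass uniformIoo :=
  Measure.restrict.instNullSingletonClass _

section Quantile

variable (ν : Measure ℝ)

/-- Junk outside `Ioo 0 1`, where the set may be unbounded below or empty (`sInf` is then `0`). -/
def quantile (u : ℝ) : ℝ := sInf {x | u ≤ cdf ν x}

variable {ν}

lemma quantile_le_iff {u : ℝ} (hu : u ∈ Ioo 0 1) (x : ℝ) :
    quantile ν u ≤ x ↔ u ≤ cdf ν x := by
  have hbdd : BddBelow {x | u ≤ cdf ν x} := by
    obtain ⟨x₀, hx₀⟩ := eventually_atBot.1 ((tendsto_cdf_atBot ν).eventually_lt_const hu.1)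
    exact ⟨x₀, fun y hy => le_of_not_gt fun hyx => (hx₀ y hyx.le).not_ge hy⟩
  have hne : {x | u ≤ cdf ν x}.Nonempty := by
    obtain ⟨x₀, hx₀⟩ := eventually_atTop.1 ((tendsto_cdf_atTop ν).eventually_const_le hu.2)
    exact ⟨x₀, hx₀ x₀ le_rfl⟩
  refine ⟨fun h => ?_, fun h => csInf_le hbdd h⟩
  -- right-continuity of the cdf puts the infimum itself in the set
  have hq : u ≤ cdf ν (quantile ν u) := by
    refine ge_of_tendsto (((cdf ν).right_continuous _).tendsto.mono_left
      (nhdsWithin_mono _ Ioi_subset_Ici_self)) (eventually_nhdsWithin_of_forall fun y hy => ?_)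
    obtain ⟨z, hz, hzy⟩ := (csInf_lt_iff hbdd hne).1 hy
    exact hz.trans (monotone_cdf ν hzy.le)
  exact hq.trans (monotone_cdf ν h)

lemma monotoneOn_quantile : MonotoneOn (quantile ν) (Ioo 0 1) := fun _ hu _ hv huv =>
  (quantile_le_iff hu _).2 (huv.trans ((quantile_le_iff hv _).1 le_rfl))

variable [IsProbabilityMeasure ν]

lemma map_quantile_uniformIoo : uniformIoo.map (quantile ν) = ν := by
  have hmeas : AEMeasurable (quantile ν) uniformIoo :=
    aemeasurable_restrict_of_monotoneOn measurableSet_Ioo monotoneOn_quantile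
  have := Measure.isProbabilityMeasure_map (μ := uniformIoo) hmeas
  refine Measure.ext_of_Iic _ _ fun x => ?_
  have hpre : quantile ν ⁻¹' Iic x ∩ Ioo 0 1 = Iic (cdf ν x) ∩ Ioo 0 1 := by
    ext u
    simp only [mem_inter_iff, mem_preimage, mem_Iic, and_congr_left_iff]
    exact fun hu => quantile_le_iff hu x
  have hvol : volume (Iic (cdf ν x) ∩ Ioo 0 1) = ENNReal.ofReal (cdf ν x) := by
    refine le_antisymm ?_ ?_
    · calc volume (Iic (cdf ν x) ∩ Ioo 0 1) ≤ volume (Ioc 0 (cdf ν x)) :=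
            measure_mono fun u hu => ⟨hu.2.1, hu.1⟩
        _ = _ := by simp
    · calc ENNReal.ofReal (cdf ν x) = volume (Ioo 0 (cdf ν x)) := by simp
        _ ≤ volume (Iic (cdf ν x) ∩ Ioo 0 1) :=
            measure_mono fun u hu => ⟨hu.2.le, hu.1, hu.2.trans_le (cdf_le_one ν x)⟩
  rw [Measure.map_apply_of_aemeasurable hmeas measurableSet_Iic, uniformIoo,
    Measure.restrict_apply' measurableSet_Ioo, hpre, hvol, ofReal_cdf]

variable [NullSingletonClass ν]

lemma leftLim_cdf (x : ℝ) : Function.leftLim (cdf ν) x = cdf ν x := by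
  have h := (cdf ν).measure_singleton x
  rw [measure_cdf, measure_singleton, eq_comm, ENNReal.ofReal_eq_zero, sub_nonpos] at h
  exact le_antisymm ((monotone_cdf ν).leftLim_le le_rfl) h

lemma cdf_quantile_le {u : ℝ} (hu : u ∈ Ioo 0 1) : cdf ν (quantile ν u) ≤ u := by
  rw [← leftLim_cdf, (monotone_cdf ν).leftLim_eq_sSup]
  refine csSup_le (nonempty_Iio.image _) ?_
  rintro _ ⟨y, hy, rfl⟩
  exact (lt_of_not_ge fun h => (not_le.2 hy) ((quantile_le_iff hu y).2 h)).le

lemma strictMonoOn_quantile : StrictMonoOn (quantile ν) (Ioo 0 1) :=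
  fun _ hu _ hv huv => lt_of_not_ge fun h =>
    huv.not_ge (((quantile_le_iff hv _).1 h).trans (cdf_quantile_le hu))

end Quantile

section NonRedundant

variable {ι α : Type*} [Preorder α]

def IsNonRedundant (x : ι → α) (i j : ι) : Prop :=
  i ≠ j ∧ x j ≤ x i ∧ ¬∃ k, k ≠ i ∧ k ≠ j ∧ x k ≤ x i ∧ x j ≤ x k

lemma isNonRedundant_comp_iff {β : Type*} [Preorder β] {f : α → β} {s : Set α}
    (hf : ∀ a ∈ s, ∀ b ∈ s, f a ≤ f b ↔ a ≤ b) {x : ι → α} (hx : ∀ i, x i ∈ s) {i j : ι} :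
    IsNonRedundant (f ∘ x) i j ↔ IsNonRedundant x i j := by
  simp only [IsNonRedundant, Function.comp, hf _ (hx _) _ (hx _)]

lemma Fin.le_iff_zero_le_and_tail_le {m : ℕ} {y z : Fin (m + 1) → α} :
    y ≤ z ↔ y 0 ≤ z 0 ∧ Fin.tail y ≤ Fin.tail z := by
  simpa using Fin.le_cons (q := y) (x := z 0) (p := Fin.tail z)

lemma IsNonRedundant.of_tail {m : ℕ} {x : ι → Fin (m + 1) → α} {i j : ι}
    (h : IsNonRedundant (fun k => Fin.tail (x k)) i j) (h0 : x j 0 ≤ x i 0) :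
    IsNonRedundant x i j := by
  obtain ⟨hij, hle, hnot⟩ := h
  refine ⟨hij, Fin.le_iff_zero_le_and_tail_le.2 ⟨h0, hle⟩, fun ⟨k, hki, hkj, hk, hk'⟩ => hnot ?_⟩
  exact ⟨k, hki, hkj, (Fin.le_iff_zero_le_and_tail_le.1 hk).2,
    (Fin.le_iff_zero_le_and_tail_le.1 hk').2⟩

end NonRedundant

section Measurability

variable {ι α : Type*} [PartialOrder α] [TopologicalSpace α] [OrderClosedTopology α]
  [MeasurableSpace α] [OpensMeasurableSpace α] [SecondCountableTopology α]

lemma measurableSet_le_eval (i j : ι) : MeasurableSet {x : ι → α | x j ≤ x i} :=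
  measurableSet_le (measurable_pi_apply j) (measurable_pi_apply i)

lemma measurableSet_isNonRedundant [Countable ι] (i j : ι) :
    MeasurableSet {x : ι → α | IsNonRedundant x i j} := by
  simp only [IsNonRedundant, ofPred_and, ← compl_ofPred, ofPred_exists]
  exact (MeasurableSet.const _).compl.inter ((measurableSet_le_eval i j).inter
    (MeasurableSet.iUnion fun k => (MeasurableSet.const _).compl.inter
      ((MeasurableSet.const _).compl.inter
        ((measurableSet_le_eval i k).inter (measurableSet_le_eval k j)))).compl)

end Measurability

section Count

variable {n d : ℕ}

lemma N2count_eq_ncard (x : Fin n → Fin d → ℝ) :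
    N2count x = {p : Fin n × Fin n | IsNonRedundant x p.1 p.2}.ncard := rfl

lemma N2count_comp_of_strictMonoOn {g : Fin d → ℝ → ℝ} {s : Set ℝ}
    (hg : ∀ c, StrictMonoOn (g c) s) {x : Fin n → Fin d → ℝ} (hx : ∀ i c, x i c ∈ s) :
    N2count (fun i c => g c (x i c)) = N2count x := by
  simp only [N2count_eq_ncard]
  congr 1
  ext p
  exact isNonRedundant_comp_iff (f := fun y c => g c (y c)) (s := univ.pi fun _ => s)
    (fun a ha b hb => forall_congr' fun c => (hg c).le_iff_le (ha c trivial) (hb c trivial))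
    (fun i c _ => hx i c)

lemma N2count_eq_sum_indicator (x : Fin n → Fin d → ℝ) :
    (N2count x : ℝ) = ∑ p ∈ (Finset.univ : Finset (Fin n)).offDiag,
      {y | IsNonRedundant y p.1 p.2}.indicator 1 x := by
  classical
  have hset : {p : Fin n × Fin n | IsNonRedundant x p.1 p.2} =
      ↑(Finset.univ.offDiag.filter fun p : Fin n × Fin n => IsNonRedundant x p.1 p.2) := by
    ext p
    simpa using fun h : IsNonRedundant x p.1 p.2 => h.1
  rw [N2count_eq_ncard, hset, ncard_coe_finset, Finset.card_filter]
  push_cast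
  simp [Set.indicator_apply]

lemma measurable_N2count : Measurable fun x : Fin n → Fin d → ℝ => (N2count x : ℝ) := by
  simp_rw [N2count_eq_sum_indicator]
  exact Finset.measurable_sum _ fun p _ =>
    measurable_one.indicator (measurableSet_isNonRedundant p.1 p.2)

lemma integral_N2count (μ : Measure (Fin n → Fin d → ℝ)) [IsFiniteMeasure μ] :
    ∫ x, (N2count x : ℝ) ∂μ =
      ∑ p ∈ (Finset.univ : Finset (Fin n)).offDiag, μ.real {x | IsNonRedundant x p.1 p.2} := by
  simp_rw [N2count_eq_sum_indicator]
  rw [integral_finsetSum _ fun p _ =>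
    (integrable_const 1).indicator (measurableSet_isNonRedundant p.1 p.2)]
  exact Finset.sum_congr rfl fun p _ => integral_indicator_one (measurableSet_isNonRedundant _ _)

end Count

section Sample

variable {n m : ℕ}

def sampleLaw {d : ℕ} (ν : Fin d → Measure ℝ) (n : ℕ) : Measure (Fin n → Fin d → ℝ) :=
  Measure.pi fun _ : Fin n => Measure.pi ν

instance {d : ℕ} (ν : Fin d → Measure ℝ) [∀ c, IsProbabilityMeasure (ν c)] :
    IsProbabilityMeasure (sampleLaw ν n) := by
  rw [sampleLaw]
  infer_instance

lemma measurePreserving_zero_tail (ν : Fin (m + 1) → Measure ℝ) [∀ c, SigmaFinite (ν c)] :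
    MeasurePreserving
      (fun x : Fin n → Fin (m + 1) → ℝ => (fun k => x k 0, fun k => Fin.tail (x k)))
      (sampleLaw ν n) ((Measure.pi fun _ : Fin n => ν 0).prod (sampleLaw (fun c => ν c.succ) n)) :=
  (measurePreserving_arrowProdEquivProdArrow ℝ (Fin m → ℝ) (Fin n) _ _).comp
    (measurePreserving_pi _ _ fun _ => measurePreserving_piFinSuccAbove ν 0)

lemma prod_self_setOf_snd_le_fst (μ : Measure ℝ) [IsProbabilityMeasure μ] [NullSingletonClass μ] :
    μ.prod μ {p | p.2 ≤ p.1} = 2⁻¹ := by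
  have hle : MeasurableSet {p : ℝ × ℝ | p.1 ≤ p.2} := measurableSet_le measurable_fst measurable_snd
  have hswap : μ.prod μ {p | p.1 ≤ p.2} = μ.prod μ {p | p.2 ≤ p.1} := by
    conv_lhs => rw [← Measure.prod_swap, Measure.map_apply measurable_swap hle]
    rfl
  have hdiag : μ.prod μ ({p | p.2 ≤ p.1} ∩ {p | p.1 ≤ p.2}) = 0 := by
    have : {p : ℝ × ℝ | p.2 ≤ p.1} ∩ {p | p.1 ≤ p.2} = {p | p.1 = p.2} := by
      ext p
      exact ⟨fun h => le_antisymm h.2 h.1, fun h => ⟨h.ge, h.le⟩⟩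
    rw [this, Measure.prod_apply (measurableSet_eq_fun measurable_fst measurable_snd)]
    simp [preimage]
  have htotal := measure_union_add_inter (μ := μ.prod μ) {p : ℝ × ℝ | p.2 ≤ p.1} hle
  have hunion : {p : ℝ × ℝ | p.2 ≤ p.1} ∪ {p | p.1 ≤ p.2} = univ :=
    eq_univ_of_forall fun p => le_total p.2 p.1
  rw [hunion, hdiag, add_zero, hswap, measure_univ] at htotal
  exact ENNReal.eq_inv_of_mul_eq_one_left (by rw [mul_two, htotal])

lemma pi_setOf_eval_le_eval {ι : Type*} [Fintype ι] (μ : Measure ℝ) [IsProbabilityMeasure μ]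
    [NullSingletonClass μ] {i j : ι} (hij : i ≠ j) :
    Measure.pi (fun _ : ι => μ) {y | y j ≤ y i} = 2⁻¹ := by
  have hindep := (iIndepFun_pi (μ := fun _ : ι => μ) (X := fun _ => id)
    fun _ => aemeasurable_id).indepFun hij
  have hmap := hindep.map_prod_eq_prod_map_map (measurable_pi_apply i).aemeasurable
    (measurable_pi_apply j).aemeasurable
  simp only [(measurePreserving_eval _ _).map_eq] at hmap
  rw [← prod_self_setOf_snd_le_fst μ, ← hmap, Measure.map_apply ((measurable_pi_apply i).prodMk
    (measurable_pi_apply j)) (measurableSet_le measurable_snd measurable_fst)]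
  rfl

lemma sampleLaw_zero_le_and_tail_mem (ν : Fin (m + 1) → Measure ℝ)
    [∀ c, IsProbabilityMeasure (ν c)] [NullSingletonClass (ν 0)] {A : Set (Fin n → Fin m → ℝ)}
    (hA : MeasurableSet A) {i j : Fin n} (hij : i ≠ j) :
    sampleLaw ν n {x | x j 0 ≤ x i 0 ∧ (fun k => Fin.tail (x k)) ∈ A} =
      sampleLaw (fun c => ν c.succ) n A * 2⁻¹ := by
  rw [mul_comm, ← pi_setOf_eval_le_eval (ν 0) hij, ← Measure.prod_prod]
  exact (measurePreserving_zero_tail ν).measure_preimage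
    ((measurableSet_le_eval i j).prod hA).nullMeasurableSet

lemma sampleLaw_isNonRedundant_mul_inv_two_le (ν : Fin (m + 1) → Measure ℝ)
    [∀ c, IsProbabilityMeasure (ν c)] [NullSingletonClass (ν 0)] {i j : Fin n} (hij : i ≠ j) :
    sampleLaw (fun c => ν c.succ) n {x | IsNonRedundant x i j} * 2⁻¹ ≤
      sampleLaw ν n {x | IsNonRedundant x i j} := by
  rw [← sampleLaw_zero_le_and_tail_mem ν (measurableSet_isNonRedundant i j) hij]
  exact measure_mono fun x hx => IsNonRedundant.of_tail hx.2 hx.1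

lemma sampleLaw_setOf_le {d : ℕ} (ν : Fin d → Measure ℝ) [∀ c, IsProbabilityMeasure (ν c)]
    [∀ c, NullSingletonClass (ν c)] {i j : Fin n} (hij : i ≠ j) :
    sampleLaw ν n {x | x j ≤ x i} = 2⁻¹ ^ d := by
  induction d with
  | zero =>
    have : {x : Fin n → Fin 0 → ℝ | x j ≤ x i} = univ :=
      eq_univ_of_forall fun x c => c.elim0
    rw [this, measure_univ, pow_zero]
  | succ m ih =>
    have hset : {x : Fin n → Fin (m + 1) → ℝ | x j ≤ x i} =
        {x : Fin n → Fin (m + 1) → ℝ |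
          x j 0 ≤ x i 0 ∧ (fun k => Fin.tail (x k)) ∈ {y : Fin n → Fin m → ℝ | y j ≤ y i}} := by
      ext x
      exact Fin.le_iff_zero_le_and_tail_le
    rw [hset, sampleLaw_zero_le_and_tail_mem ν (measurableSet_le_eval i j) hij, ih, pow_succ]

end Sample

section Expected

variable {n d : ℕ}

/-- The paper's `E[N₂(n,d)]`, computed for uniform samples (see `integral_N2count_sampleLaw`). -/
def expectedN2 (n d : ℕ) : ℝ :=
  ∫ x, (N2count x : ℝ) ∂sampleLaw (fun _ : Fin d => uniformIoo) n

lemma aemeasurable_pi_map {ι : Type*} [Fintype ι] {X Y : ι → Type*} [∀ i, MeasurableSpace (X i)]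
    [∀ i, MeasurableSpace (Y i)] {μ : ∀ i, Measure (X i)} [∀ i, SigmaFinite (μ i)]
    {f : ∀ i, X i → Y i} (hf : ∀ i, AEMeasurable (f i) (μ i)) :
    AEMeasurable (fun x i => f i (x i)) (Measure.pi μ) :=
  aemeasurable_pi_lambda _ fun i =>
    (hf i).comp_quasiMeasurePreserving (Measure.quasiMeasurePreserving_eval _ i)

lemma integral_N2count_sampleLaw (ν : Fin d → Measure ℝ) [∀ c, IsProbabilityMeasure (ν c)]
    [∀ c, NullSingletonClass (ν c)] :
    ∫ x, (N2count x : ℝ) ∂sampleLaw ν n = expectedN2 n d := by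
  have hQ : ∀ c, AEMeasurable (quantile (ν c)) uniformIoo := fun c =>
    aemeasurable_restrict_of_monotoneOn measurableSet_Ioo monotoneOn_quantile
  have hrow := aemeasurable_pi_map hQ
  have hmap : (sampleLaw (fun _ => uniformIoo) n).map (fun x i c => quantile (ν c) (x i c)) =
      sampleLaw ν n := by
    rw [sampleLaw, Measure.pi_map_pi fun _ => hrow, Measure.pi_map_pi hQ]
    simp only [map_quantile_uniformIoo]
    rfl
  have hall : AEMeasurable (fun x i c => quantile (ν c) (x i c))
      (sampleLaw (fun _ => uniformIoo) n) := aemeasurable_pi_map fun _ => hrow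
  rw [← hmap, integral_map hall measurable_N2count.aestronglyMeasurable, expectedN2]
  have hbox_row : ∀ᵐ y ∂Measure.pi fun _ : Fin d => uniformIoo, ∀ c, y c ∈ Ioo 0 1 :=
    ae_all_iff.2 fun _ => Measure.tendsto_eval_ae_ae.eventually (ae_restrict_mem measurableSet_Ioo)
  have hbox : ∀ᵐ x ∂sampleLaw (fun _ : Fin d => uniformIoo) n, ∀ i c, x i c ∈ Ioo 0 1 :=
    ae_all_iff.2 fun i => (Measure.tendsto_eval_ae_ae (i := i)
      (μ := fun _ : Fin n => Measure.pi fun _ : Fin d => uniformIoo)).eventually hbox_row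
  refine integral_congr_ae ?_
  filter_upwards [hbox] with x hx
  rw [N2count_comp_of_strictMonoOn (fun _ => strictMonoOn_quantile) hx]

lemma integral_N2count_le (ν : Fin d → Measure ℝ) [∀ c, IsProbabilityMeasure (ν c)]
    [∀ c, NullSingletonClass (ν c)] :
    ∫ x, (N2count x : ℝ) ∂sampleLaw ν n ≤ n * ((n : ℝ) - 1) / 2 ^ d := by
  rw [integral_N2count]
  calc _ ≤ ∑ _p ∈ (Finset.univ : Finset (Fin n)).offDiag, (2⁻¹ : ℝ) ^ d := by
        refine Finset.sum_le_sum fun p hp => ?_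
        calc (sampleLaw ν n).real {x | IsNonRedundant x p.1 p.2}
            ≤ (sampleLaw ν n).real {x | x p.2 ≤ x p.1} := measureReal_mono fun x hx => hx.2.1
          _ = (2⁻¹ : ℝ) ^ d := by
            rw [measureReal_def, sampleLaw_setOf_le ν (Finset.mem_offDiag.1 hp).2.2]
            simp
    _ = n * ((n : ℝ) - 1) / 2 ^ d := by
        rw [Finset.sum_const, Finset.offDiag_card, Finset.card_univ, Fintype.card_fin,
          nsmul_eq_mul, Nat.cast_sub (Nat.le_mul_self n), inv_pow]
        push_cast
        ring

lemma expectedN2_div_two_le_succ : expectedN2 n d / 2 ≤ expectedN2 n (d + 1) := by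
  rw [expectedN2, expectedN2, integral_N2count, integral_N2count, Finset.sum_div]
  refine Finset.sum_le_sum fun p hp => ?_
  have hkey := sampleLaw_isNonRedundant_mul_inv_two_le (fun _ : Fin (d + 1) => uniformIoo)
    (Finset.mem_offDiag.1 hp).2.2
  have := ENNReal.toReal_mono (measure_ne_top _ _) hkey
  rw [ENNReal.toReal_mul] at this
  simpa [measureReal_def, div_eq_mul_inv] using this

lemma integral_N2count_of_iIndepFun {Ω : Type*} [MeasurableSpace Ω] {P : Measure Ω}
    (ν : Fin d → Measure ℝ) {X : Fin n → Ω → Fin d → ℝ} (hX_meas : ∀ i, Measurable (X i))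
    (hX_indep : iIndepFun X P) (hX_law : ∀ i, P.map (X i) = Measure.pi ν) :
    ∫ ω, (N2count fun i => X i ω : ℝ) ∂P = ∫ x, (N2count x : ℝ) ∂sampleLaw ν n := by
  rw [sampleLaw, ← funext hX_law, ← hX_indep.map_fun_eq_pi_map fun i => (hX_meas i).aemeasurable,
    integral_map (aemeasurable_pi_lambda _ fun i => (hX_meas i).aemeasurable)
      measurable_N2count.aestronglyMeasurable]

end Expected

section Polynomial

def sPoly (N e : ℕ) (x : ℝ) : ℝ :=
  ∑ k ∈ Finset.range (N + 1), (N.choose k : ℝ) * (-x) ^ k / ((k + 1) ^ e * (k + 2) ^ e)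

lemma S_eq_sPoly (n e : ℕ) : S n e = n * ((n : ℝ) - 1) * sPoly (n - 2) e 1 := by
  rcases lt_or_ge n 2 with hn | hn
  · interval_cases n <;> simp [S]
  · rw [S, sPoly, show n - 1 = n - 2 + 1 by omega]

lemma sPoly_zero (N : ℕ) (x : ℝ) : sPoly N 0 x = (1 - x) ^ N := by
  rw [sPoly, sub_eq_neg_add, add_pow]
  simp [mul_comm]

lemma sPoly_apply_zero (N e : ℕ) : sPoly N e 0 = 1 / 2 ^ e := by
  rw [sPoly, Finset.sum_eq_single_of_mem 0 (by simp) fun k _ hk => by simp [hk]]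
  norm_num

@[fun_prop]
lemma continuous_sPoly (N e : ℕ) : Continuous (sPoly N e) := by
  unfold sPoly
  fun_prop

lemma integral_one_sub_mul_pow (k : ℕ) :
    ∫ t in (0 : ℝ)..1, (1 - t) * t ^ k = 1 / ((k + 1) * (k + 2)) := by
  simp_rw [sub_mul, one_mul, ← pow_succ']
  rw [intervalIntegral.integral_sub (intervalIntegral.intervalIntegrable_pow _)
    (intervalIntegral.intervalIntegrable_pow _), integral_pow, integral_pow]
  field_simp
  push_cast
  ring

lemma sPoly_succ (N e : ℕ) (x : ℝ) :
    sPoly N (e + 1) x = ∫ t in (0 : ℝ)..1, (1 - t) * sPoly N e (x * t) := by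
  have hterm : ∀ t, (1 - t) * sPoly N e (x * t) = ∑ k ∈ Finset.range (N + 1),
      (N.choose k : ℝ) * (-x) ^ k / ((k + 1) ^ e * (k + 2) ^ e) * ((1 - t) * t ^ k) := by
    intro t
    rw [sPoly, Finset.mul_sum]
    refine Finset.sum_congr rfl fun k _ => ?_
    rw [neg_mul_eq_neg_mul, mul_pow]
    ring
  simp_rw [hterm]
  rw [intervalIntegral.integral_finsetSum fun k _ =>
    (by fun_prop : Continuous _).intervalIntegrable _ _]
  refine Finset.sum_congr rfl fun k _ => ?_
  rw [intervalIntegral.integral_const_mul, integral_one_sub_mul_pow]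
  field_simp
  ring

lemma antitoneOn_sPoly (N e : ℕ) : AntitoneOn (sPoly N e) (Icc 0 1) := by
  induction e with
  | zero =>
    intro x hx y hy hxy
    simp only [sPoly_zero]
    exact pow_le_pow_left₀ (by linarith [hy.2]) (by linarith) N
  | succ e ih =>
    intro x hx y hy hxy
    rw [sPoly_succ, sPoly_succ]
    refine intervalIntegral.integral_mono_on zero_le_one
      ((by fun_prop : Continuous _).intervalIntegrable _ _)
      ((by fun_prop : Continuous _).intervalIntegrable _ _) fun t ht => ?_
    have hxt : x * t ∈ Icc (0 : ℝ) 1 := ⟨mul_nonneg hx.1 ht.1, by nlinarith [hx.2, ht.1, ht.2]⟩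
    have hyt : y * t ∈ Icc (0 : ℝ) 1 := ⟨mul_nonneg hy.1 ht.1, by nlinarith [hy.2, ht.1, ht.2]⟩
    exact mul_le_mul_of_nonneg_left (ih hxt hyt (mul_le_mul_of_nonneg_right hxy ht.1))
      (sub_nonneg.2 ht.2)

lemma sPoly_one_le (N e : ℕ) : sPoly N e 1 ≤ 1 / 2 ^ e := by
  rw [← sPoly_apply_zero N e]
  exact antitoneOn_sPoly N e ⟨le_rfl, zero_le_one⟩ ⟨zero_le_one, le_rfl⟩ zero_le_one

lemma sPoly_one_div_two_le (N e : ℕ) : sPoly N e 1 / 2 ≤ sPoly N (e + 1) 1 := by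
  have hhalf : ∫ t in (0 : ℝ)..1, (1 - t) = 1 / 2 := by
    simpa using integral_one_sub_mul_pow 0
  calc sPoly N e 1 / 2 = ∫ t in (0 : ℝ)..1, (1 - t) * sPoly N e 1 := by
        rw [intervalIntegral.integral_mul_const, hhalf]
        ring
    _ ≤ _ := by
      rw [sPoly_succ]
      refine intervalIntegral.integral_mono_on zero_le_one
        ((by fun_prop : Continuous _).intervalIntegrable _ _)
        ((by fun_prop : Continuous _).intervalIntegrable _ _) fun t ht => ?_
      rw [one_mul]
      exact mul_le_mul_of_nonneg_left (antitoneOn_sPoly N e ht ⟨zero_le_one, le_rfl⟩ ht.2)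
        (sub_nonneg.2 ht.2)

lemma natCast_mul_sub_one_nonneg (n : ℕ) : 0 ≤ (n : ℝ) * ((n : ℝ) - 1) := by
  rcases Nat.eq_zero_or_pos n with rfl | hn
  · simp
  · exact mul_nonneg n.cast_nonneg (sub_nonneg.2 (Nat.one_le_cast.2 hn))

lemma S_div_two_le_S_succ (n e : ℕ) : S n e / 2 ≤ S n (e + 1) := by
  rw [S_eq_sPoly, S_eq_sPoly, mul_div_assoc]
  exact mul_le_mul_of_nonneg_left (sPoly_one_div_two_le _ _) (natCast_mul_sub_one_nonneg n)

lemma S_le (n d : ℕ) : S n d ≤ n * ((n : ℝ) - 1) / 2 ^ d := by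
  rw [S_eq_sPoly, ← mul_one_div]
  exact mul_le_mul_of_nonneg_left (sPoly_one_le _ _) (natCast_mul_sub_one_nonneg n)

end Polynomial

theorem monotonicity_in_dimension_general
    (d n : ℕ) (hd : 2 ≤ d)
    -- d-dimensional sample:
    (ν : Fin d → Measure ℝ) (hν_prob : ∀ i, IsProbabilityMeasure (ν i))
    (hν_atomless : ∀ i, ∀ x : ℝ, ν i {x} = 0)
    {Ω : Type*} [MeasurableSpace Ω] (P : Measure Ω)
    (X : Fin n → Ω → (Fin d → ℝ)) (hX_meas : ∀ i, Measurable (X i))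
    (hX_indep : ProbabilityTheory.iIndepFun X P)
    (hX_law : ∀ i, Measure.map (X i) P = Measure.pi ν)
    -- (d-1)-dimensional sample (from an arbitrary atomless product law):
    (ν' : Fin (d - 1) → Measure ℝ) (hν'_prob : ∀ i, IsProbabilityMeasure (ν' i))
    (hν'_atomless : ∀ i, ∀ x : ℝ, ν' i {x} = 0)
    {Ω' : Type*} [MeasurableSpace Ω'] (P' : Measure Ω')
    (Y : Fin n → Ω' → (Fin (d - 1) → ℝ)) (hY_meas : ∀ i, Measurable (Y i))
    (hY_indep : ProbabilityTheory.iIndepFun Y P')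
    (hY_law : ∀ i, Measure.map (Y i) P' = Measure.pi ν') :
    ((1 : ℝ) / 2) * ∫ ω, (N2count (fun i => Y i ω) : ℝ) ∂P'
        ≤ ∫ ω, (N2count (fun i => X i ω) : ℝ) ∂P ∧
    ∫ ω, (N2count (fun i => X i ω) : ℝ) ∂P ≤ n * ((n : ℝ) - 1) / 2 ^ d ∧
    S n (d - 1) / 2 ≤ S n d ∧
    S n d ≤ n * ((n : ℝ) - 1) / 2 ^ d := by
  have := hν_prob
  have := hν'_prob
  have : ∀ i, NullSingletonClass (ν i) := fun i => ⟨hν_atomless i⟩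
  have : ∀ i, NullSingletonClass (ν' i) := fun i => ⟨hν'_atomless i⟩
  rw [integral_N2count_of_iIndepFun ν hX_meas hX_indep hX_law,
    integral_N2count_of_iIndepFun ν' hY_meas hY_indep hY_law]
  obtain ⟨e, rfl⟩ : ∃ e, d = e + 1 := ⟨d - 1, by omega⟩
  -- `e + 1 - 1` reduces to `e`, so the lemmas stated for `e` apply as they are
  refine ⟨?_, integral_N2count_le ν, S_div_two_le_S_succ n e, S_le n (e + 1)⟩
  rw [integral_N2count_sampleLaw, integral_N2count_sampleLaw, one_div_mul_eq_div]
  exact expectedN2_div_two_le_succ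

/-- **Monotonicity in dimension of the expected number of non-redundant
constraints**: for `d ≥ 2`, `(1/2) E[N₂(n,d-1)] ≤ E[N₂(n,d)] ≤ n(n-1)/2^d`,
where the counts are for i.i.d. samples from arbitrary products of atomless
distributions; equivalently `S(n,d-1)/2 ≤ S(n,d) ≤ n(n-1)/2^d`. -/
theorem monotonicity_in_dimension
    (d n : ℕ) (hd : 2 ≤ d)
    -- d-dimensional sample:
    (ν : Fin d → Measure ℝ) (hν_prob : ∀ i, IsProbabilityMeasure (ν i))
    (hν_atomless : ∀ i, ∀ x : ℝ, ν i {x} = 0)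
    {Ω : Type*} [MeasurableSpace Ω] (P : Measure Ω) [IsProbabilityMeasure P]
    (X : Fin n → Ω → (Fin d → ℝ)) (hX_meas : ∀ i, Measurable (X i))
    (hX_indep : ProbabilityTheory.iIndepFun X P)
    (hX_law : ∀ i, Measure.map (X i) P = Measure.pi ν)
    -- (d-1)-dimensional sample (from an arbitrary atomless product law):
    (ν' : Fin (d - 1) → Measure ℝ) (hν'_prob : ∀ i, IsProbabilityMeasure (ν' i))
    (hν'_atomless : ∀ i, ∀ x : ℝ, ν' i {x} = 0)
    {Ω' : Type*} [MeasurableSpace Ω'] (P' : Measure Ω') [IsProbabilityMeasure P']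
    (Y : Fin n → Ω' → (Fin (d - 1) → ℝ)) (hY_meas : ∀ i, Measurable (Y i))
    (hY_indep : ProbabilityTheory.iIndepFun Y P')
    (hY_law : ∀ i, Measure.map (Y i) P' = Measure.pi ν') :
    ((1 : ℝ) / 2) * ∫ ω, (N2count (fun i => Y i ω) : ℝ) ∂P'
        ≤ ∫ ω, (N2count (fun i => X i ω) : ℝ) ∂P ∧
    ∫ ω, (N2count (fun i => X i ω) : ℝ) ∂P ≤ n * ((n : ℝ) - 1) / 2 ^ d ∧
    S n (d - 1) / 2 ≤ S n d ∧
    S n d ≤ n * ((n : ℝ) - 1) / 2 ^ d :=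
  monotonicity_in_dimension_general d n hd ν hν_prob hν_atomless P X hX_meas hX_indep hX_law ν'
    hν'_prob hν'_atomless P' Y hY_meas hY_indep hY_law

end OrthoConstraints
end
end
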